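/- Let A, B be distinct n×n complex positive definite matrices, and let μ_1 ≥ … ≥ μ_n be the eigenvalues of A^{-1} ♯ B. For s, t ∈ ℝ with 1 − s + sμ_1 > 0 and 1 − s + sμ_n > 0, set m = min_{1≤i≤n} (1 − s + sμ_i)/μ_i^t and M = max_{1≤i≤n} (1 − s + sμ_i)/μ_i^t. Then m^2 · (A ♮_t B) ⪯ A ◇_s B and A ◇_s B ⪯ M^2 · (A ♮_t B), where ⪯ is the near order. -/

import Mathlib

open scoped ComplexOrder Matrix

noncomputable section

/-- Real power of a (positive definite) matrix via the continuous functional calculus. -/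
def mpow {n : ℕ} (A : Matrix (Fin n) (Fin n) ℂ) (t : ℝ) : Matrix (Fin n) (Fin n) ℂ :=
  cfc (fun x : ℝ => x ^ t) A

/-- The matrix logarithm of a (positive definite) matrix via the continuous functional calculus. -/
def mlog {n : ℕ} (A : Matrix (Fin n) (Fin n) ℂ) : Matrix (Fin n) (Fin n) ℂ :=
  cfc Real.log A

/-- The metric geometric mean `A ♯ₜ B = A^{1/2} (A^{-1/2} B A^{-1/2})^t A^{1/2}`.
`A ♯ B` is `gmean A B (1/2)`. -/
def gmean {n : ℕ} (A B : Matrix (Fin n) (Fin n) ℂ) (t : ℝ) : Matrix (Fin n) (Fin n) ℂ :=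
  mpow A (1/2) * mpow (mpow A (-(1/2)) * B * mpow A (-(1/2))) t * mpow A (1/2)

/-- The Loewner order: `A ≤ B` iff `B - A` is positive semidefinite. -/
def LoewnerLE {n : ℕ} (A B : Matrix (Fin n) (Fin n) ℂ) : Prop :=
  (B - A).PosSemidef

/-- The near order: `A ⪯ B` iff `I ≤ A⁻¹ ♯ B` in the Loewner order. -/
def NearLE {n : ℕ} (A B : Matrix (Fin n) (Fin n) ℂ) : Prop :=
  LoewnerLE 1 (gmean A⁻¹ B (1/2))

/-- The spectral geometric mean `A ♮ₜ B = (A⁻¹ ♯ B)^t A (A⁻¹ ♯ B)^t`. -/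
def smean {n : ℕ} (A B : Matrix (Fin n) (Fin n) ℂ) (t : ℝ) : Matrix (Fin n) (Fin n) ℂ :=
  mpow (gmean A⁻¹ B (1/2)) t * A * mpow (gmean A⁻¹ B (1/2)) t

/-- The Wasserstein mean `A ◇ₜ B = [(1-t)I + t(A⁻¹ ♯ B)] A [(1-t)I + t(A⁻¹ ♯ B)]`. -/
def wmean {n : ℕ} (A B : Matrix (Fin n) (Fin n) ℂ) (t : ℝ) : Matrix (Fin n) (Fin n) ℂ :=
  (((1 - t : ℝ) : ℂ) • (1 : Matrix (Fin n) (Fin n) ℂ) + ((t : ℝ) : ℂ) • gmean A⁻¹ B (1/2)) * A *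
    (((1 - t : ℝ) : ℂ) • (1 : Matrix (Fin n) (Fin n) ℂ) + ((t : ℝ) : ℂ) • gmean A⁻¹ B (1/2))

/-- The arithmetic mean `A ∇ₜ B = (1-t)A + tB`. -/
def amean {n : ℕ} (A B : Matrix (Fin n) (Fin n) ℂ) (t : ℝ) : Matrix (Fin n) (Fin n) ℂ :=
  ((1 - t : ℝ) : ℂ) • A + ((t : ℝ) : ℂ) • B

/-- The matrix absolute value `|X| = (XᴴX)^{1/2}`. -/
def matAbs {n : ℕ} (X : Matrix (Fin n) (Fin n) ℂ) : Matrix (Fin n) (Fin n) ℂ :=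
  mpow (Xᴴ * X) (1/2)

/-- The eigenvalues of a Hermitian matrix listed in nonincreasing order:
`eigDesc hA i` is `λ_{i+1}(A)`, so `eigDesc hA 0 = λ₁(A) ≥ eigDesc hA 1 = λ₂(A) ≥ ⋯`. -/
def eigDesc {n : ℕ} {A : Matrix (Fin n) (Fin n) ℂ} (hA : A.IsHermitian) : Fin n → ℝ :=
  fun i => (hA.eigenvalues ∘ Tuple.sort hA.eigenvalues) i.rev

/-!
Write `C = A⁻¹ ♯ B`. Both `A ♮ₜ B` and `A ◇ₛ B` are congruences `f(C) A f(C)`, with `f(x) = xᵗ`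
and `f(x) = 1 − s + s x` respectively. For `X, R > 0` the Riccati identity `X⁻¹ ♯ (R X R) = R`
shows that `X ⪯ R X R` exactly when `I ≤ R`; taking `X = p(C) A p(C)` and `R = (q/p)(C)`, this gives
`p(C) A p(C) ⪯ q(C) A q(C)` whenever `0 < p ≤ q` on the spectrum of `C`. The constants `m` and `M`
are the best ones with `m xᵗ ≤ 1 − s + s x ≤ M xᵗ` at every eigenvalue `x` of `C`.
-/

open scoped MatrixOrder

section FunctionalCalculus

variable {ι 𝕜 : Type*} [Fintype ι] [DecidableEq ι] [RCLike 𝕜]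

lemma Matrix.PosDef.spectrum_pos {A : Matrix ι ι 𝕜} (hA : A.PosDef) {x : ℝ}
    (hx : x ∈ spectrum ℝ A) : 0 < x :=
  (StarOrderedRing.isStrictlyPositive_iff_spectrum_pos A).mp hA.isStrictlyPositive x hx

lemma Matrix.PosDef.continuousOn_rpow_spectrum {A : Matrix ι ι 𝕜} (hA : A.PosDef) (t : ℝ) :
    ContinuousOn (fun x : ℝ => x ^ t) (spectrum ℝ A) := fun x hx =>
  (Real.continuousAt_rpow_const x t (Or.inl (hA.spectrum_pos hx).ne')).continuousWithinAt

lemma Matrix.posDef_cfc {A : Matrix ι ι 𝕜} (hA : IsSelfAdjoint A) {f : ℝ → ℝ}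
    (hf : ContinuousOn f (spectrum ℝ A)) (hpos : ∀ x ∈ spectrum ℝ A, 0 < f x) :
    (cfc f A).PosDef :=
  Matrix.IsStrictlyPositive.posDef ((cfc_isStrictlyPositive_iff f A hf hA).mpr hpos)

lemma Matrix.PosDef.hermitian_conj {M P : Matrix ι ι 𝕜} (hM : M.PosDef) (hP : P.IsHermitian)
    (hPu : IsUnit P) : (P * M * P).PosDef := by
  simpa only [hP.eq] using
    hM.conjTranspose_mul_mul_same (Matrix.mulVec_injective_iff_isUnit.mpr hPu)

end FunctionalCalculus

section MatrixPower

variable {n : ℕ} {A : Matrix (Fin n) (Fin n) ℂ}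

lemma mpow_posDef (hA : A.PosDef) (t : ℝ) : (mpow A t).PosDef :=
  Matrix.posDef_cfc hA.isHermitian.isSelfAdjoint (hA.continuousOn_rpow_spectrum t)
    fun _ hx => Real.rpow_pos_of_pos (hA.spectrum_pos hx) t

lemma mpow_mul_mpow (hA : A.PosDef) (a b : ℝ) : mpow A a * mpow A b = mpow A (a + b) := by
  rw [mpow, mpow, mpow, ← cfc_mul _ _ A (hA.continuousOn_rpow_spectrum a)
    (hA.continuousOn_rpow_spectrum b)]
  exact cfc_congr fun x hx => (Real.rpow_add (hA.spectrum_pos hx) a b).symm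

lemma mpow_zero (hA : IsSelfAdjoint A) : mpow A 0 = 1 := by
  simp only [mpow, Real.rpow_zero]
  exact cfc_const_one ℝ A hA

lemma mpow_one (hA : IsSelfAdjoint A) : mpow A 1 = A := by
  simp only [mpow, Real.rpow_one]
  exact cfc_id' ℝ A hA

lemma mpow_neg_one (hA : A.PosDef) : mpow A (-1) = A⁻¹ := by
  simp only [mpow, Real.rpow_neg_one]
  rw [Matrix.nonsing_inv_eq_ringInverse]
  exact cfc_ringInverse_id A hA.isUnit hA.isHermitian.isSelfAdjoint

lemma mpow_mul_self_one_half {S : Matrix (Fin n) (Fin n) ℂ} (hS : S.PosDef) :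
    mpow (S * S) (1/2) = S := by
  have hSS : (S * S).PosDef := by
    simpa using Matrix.PosDef.one.hermitian_conj hS.isHermitian hS.isUnit
  refine (CFC.sq_eq_sq_iff _ _ (mpow_posDef hSS _).posSemidef.nonneg hS.posSemidef.nonneg).mp ?_
  rw [sq, sq, mpow_mul_mpow hSS, add_halves, mpow_one hSS.isHermitian.isSelfAdjoint]

end MatrixPower

section Means

variable {n : ℕ}

lemma gmean_posDef {A B : Matrix (Fin n) (Fin n) ℂ} (hA : A.PosDef) (hB : B.PosDef) (t : ℝ) :
    (gmean A B t).PosDef := by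
  have hA' := mpow_posDef hA (-(1/2))
  have hA'' := mpow_posDef hA (1/2)
  exact (mpow_posDef (hB.hermitian_conj hA'.isHermitian hA'.isUnit) t).hermitian_conj
    hA''.isHermitian hA''.isUnit

theorem gmean_inv_conj_eq {X R : Matrix (Fin n) (Fin n) ℂ} (hX : X.PosDef) (hR : R.PosDef) :
    gmean X⁻¹ (R * X * R) (1/2) = R := by
  have hY : X⁻¹.PosDef := hX.inv
  set S := mpow X⁻¹ (1/2)
  set T := mpow X⁻¹ (-(1/2))
  have hTT : T * T = X := by
    rw [mpow_mul_mpow hY, show -(1/2) + -(1/2) = (-1 : ℝ) by norm_num, mpow_neg_one hY,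
      Matrix.nonsing_inv_nonsing_inv X ((Matrix.isUnit_iff_isUnit_det X).mp hX.isUnit)]
  have hST : S * T = 1 := by
    rw [mpow_mul_mpow hY, add_neg_cancel, mpow_zero hY.isHermitian.isSelfAdjoint]
  have hTS : T * S = 1 := by
    rw [mpow_mul_mpow hY, neg_add_cancel, mpow_zero hY.isHermitian.isSelfAdjoint]
  have hT := mpow_posDef hY (-(1/2))
  have hTRT : (T * R * T).PosDef := hR.hermitian_conj hT.isHermitian hT.isUnit
  -- `T = X^{1/2}`, so the middle factor of the mean is the square of `T R T`.
  have hmid : T * (R * X * R) * T = (T * R * T) * (T * R * T) := by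
    rw [← hTT]; simp only [mul_assoc]
  calc gmean X⁻¹ (R * X * R) (1/2) = S * mpow (T * (R * X * R) * T) (1/2) * S := rfl
    _ = S * mpow ((T * R * T) * (T * R * T)) (1/2) * S := by rw [hmid]
    _ = (S * T) * R * (T * S) := by rw [mpow_mul_self_one_half hTRT]; simp only [mul_assoc]
    _ = R := by rw [hST, hTS, one_mul, mul_one]

theorem nearLE_conj_iff {X R : Matrix (Fin n) (Fin n) ℂ} (hX : X.PosDef) (hR : R.PosDef) :
    NearLE X (R * X * R) ↔ LoewnerLE 1 R := by
  rw [NearLE, gmean_inv_conj_eq hX hR]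

theorem nearLE_cfc_conj {C A : Matrix (Fin n) (Fin n) ℂ} (hC : C.PosDef) (hA : A.PosDef)
    {p q : ℝ → ℝ} (hp : ContinuousOn p (spectrum ℝ C)) (hq : ContinuousOn q (spectrum ℝ C))
    (hp0 : ∀ x ∈ spectrum ℝ C, 0 < p x) (hpq : ∀ x ∈ spectrum ℝ C, p x ≤ q x) :
    NearLE (cfc p C * A * cfc p C) (cfc q C * A * cfc q C) := by
  have hC' : IsSelfAdjoint C := hC.isHermitian.isSelfAdjoint
  set P := cfc p C
  set R := cfc (fun x => q x / p x) C
  have hr : ContinuousOn (fun x => q x / p x) (spectrum ℝ C) :=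
    hq.div hp fun x hx => (hp0 x hx).ne'
  have hRP : cfc q C = R * P := by
    rw [← cfc_mul _ _ C hr hp]
    exact cfc_congr fun x hx => (div_mul_cancel₀ _ (hp0 x hx).ne').symm
  have hPR : P * R = R * P := (cfc_commute_cfc _ _ C).eq
  have hP : P.PosDef := Matrix.posDef_cfc hC' hp hp0
  have hR : R.PosDef :=
    Matrix.posDef_cfc hC' hr fun x hx => div_pos ((hp0 x hx).trans_le (hpq x hx)) (hp0 x hx)
  have hconj : cfc q C * A * cfc q C = R * (P * A * P) * R := by
    calc cfc q C * A * cfc q C = R * P * A * (P * R) := by rw [hRP, hPR]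
      _ = R * (P * A * P) * R := by simp only [mul_assoc]
  rw [hconj, nearLE_conj_iff (hA.hermitian_conj hP.isHermitian hP.isUnit) hR]
  exact one_le_cfc _ C (fun x hx => (one_le_div (hp0 x hx)).mpr (hpq x hx)) hr hC'

lemma wmean_eq_cfc {A B : Matrix (Fin n) (Fin n) ℂ} (hC : (gmean A⁻¹ B (1/2)).IsHermitian)
    (s : ℝ) :
    wmean A B s = cfc (fun x : ℝ => 1 - s + s * x) (gmean A⁻¹ B (1/2)) * A *
      cfc (fun x : ℝ => 1 - s + s * x) (gmean A⁻¹ B (1/2)) := by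
  rw [wmean, cfc_const_add _ _ _ (by fun_prop) hC.isSelfAdjoint,
    cfc_const_mul_id _ _ hC.isSelfAdjoint, Algebra.algebraMap_eq_smul_one,
    RCLike.real_smul_eq_coe_smul (K := ℂ), RCLike.real_smul_eq_coe_smul (K := ℂ)]
  rfl

lemma smul_smean_eq_cfc {A B : Matrix (Fin n) (Fin n) ℂ} (hC : (gmean A⁻¹ B (1/2)).PosDef)
    (c t : ℝ) :
    ((c ^ 2 : ℝ) : ℂ) • smean A B t = cfc (fun x : ℝ => c * x ^ t) (gmean A⁻¹ B (1/2)) * A *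
      cfc (fun x : ℝ => c * x ^ t) (gmean A⁻¹ B (1/2)) := by
  rw [cfc_const_mul c _ _ (hC.continuousOn_rpow_spectrum t),
    RCLike.real_smul_eq_coe_smul (K := ℂ), smean, smul_mul_assoc, mul_smul_comm, smul_mul_assoc,
    smul_smul, sq, Complex.ofReal_mul]
  rfl

end Means

lemma add_mul_pos_of_le_of_le {u s a b x : ℝ} (ha : 0 < u + s * a) (hb : 0 < u + s * b)
    (hax : a ≤ x) (hxb : x ≤ b) : 0 < u + s * x := by
  rcases le_total 0 s with hs | hs <;> nlinarith

lemma ciInf_div_mul_le {ι : Type*} [Finite ι] (g w : ι → ℝ) {i : ι} (hw : 0 < w i) :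
    (⨅ j, g j / w j) * w i ≤ g i :=
  (le_div_iff₀ hw).mp (ciInf_le (Set.finite_range _).bddBelow i)

lemma le_ciSup_div_mul {ι : Type*} [Finite ι] (g w : ι → ℝ) {i : ι} (hw : 0 < w i) :
    g i ≤ (⨆ j, g j / w j) * w i :=
  (div_le_iff₀ hw).mp (le_ciSup (f := fun j => g j / w j) (Set.finite_range _).bddAbove i)

lemma Finite.ciInf_pos {ι : Type*} [Finite ι] [Nonempty ι] {f : ι → ℝ} (hf : ∀ i, 0 < f i) :
    0 < ⨅ i, f i := by
  obtain ⟨i, hi⟩ := exists_eq_ciInf_of_finite (f := f)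
  exact hi ▸ hf i

theorem smean_wmean_near_order_range_general {n : ℕ} (A B : Matrix (Fin n) (Fin n) ℂ)
    (hA : A.PosDef) (hB : B.PosDef)
    (h : (gmean A⁻¹ B (1/2)).IsHermitian) (s t : ℝ)
    (hs1 : 0 < 1 - s + s * (⨆ i, h.eigenvalues i))
    (hsn : 0 < 1 - s + s * (⨅ i, h.eigenvalues i)) :
    NearLE ((((⨅ i, (1 - s + s * h.eigenvalues i) / h.eigenvalues i ^ t) ^ 2 : ℝ) : ℂ) •
        smean A B t) (wmean A B s) ∧
    NearLE (wmean A B s)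
      ((((⨆ i, (1 - s + s * h.eigenvalues i) / h.eigenvalues i ^ t) ^ 2 : ℝ) : ℂ) •
        smean A B t) := by
  have hC : (gmean A⁻¹ B (1/2)).PosDef := gmean_posDef hA.inv hB _
  have hspec := h.spectrum_real_eq_range_eigenvalues
  have hμt (i : Fin n) : 0 < h.eigenvalues i ^ t := Real.rpow_pos_of_pos (hC.eigenvalues_pos i) t
  have hg (i : Fin n) : 0 < 1 - s + s * h.eigenvalues i :=
    add_mul_pos_of_le_of_le hsn hs1 (ciInf_le (Set.finite_range _).bddBelow i)
      (le_ciSup (Set.finite_range _).bddAbove i)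
  have hpow := hC.continuousOn_rpow_spectrum t
  rw [smul_smean_eq_cfc hC, smul_smean_eq_cfc hC, wmean_eq_cfc h]
  refine ⟨nearLE_cfc_conj hC hA (continuousOn_const.mul hpow) (by fun_prop) ?_ ?_,
    nearLE_cfc_conj hC hA (by fun_prop) (continuousOn_const.mul hpow) ?_ ?_⟩ <;>
    rw [hspec] <;> rintro _ ⟨i, rfl⟩
  · have : Nonempty (Fin n) := ⟨i⟩
    exact mul_pos (Finite.ciInf_pos fun j => div_pos (hg j) (hμt j)) (hμt i)
  · exact ciInf_div_mul_le (fun j => 1 - s + s * h.eigenvalues j) _ (hμt i)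
  · exact hg i
  · exact le_ciSup_div_mul (fun j => 1 - s + s * h.eigenvalues j) _ (hμt i)

/-- for distinct `A, B` with `μ₁ ≥ ⋯ ≥ μₙ` the eigenvalues of `A⁻¹ ♯ B`,
if `1 − s + sμ₁ > 0` and `1 − s + sμₙ > 0`, then with
`m = min_i (1 − s + sμᵢ)/μᵢ^t` and `M = max_i (1 − s + sμᵢ)/μᵢ^t`:
`m² (A ♮ₜ B) ⪯ A ◇ₛ B ⪯ M² (A ♮ₜ B)`. -/
theorem smean_wmean_near_order_range {n : ℕ} (A B : Matrix (Fin n) (Fin n) ℂ)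
    (hA : A.PosDef) (hB : B.PosDef) (hAB : A ≠ B)
    (h : (gmean A⁻¹ B (1/2)).IsHermitian) (s t : ℝ)
    (hs1 : 0 < 1 - s + s * (⨆ i, h.eigenvalues i))
    (hsn : 0 < 1 - s + s * (⨅ i, h.eigenvalues i)) :
    NearLE ((((⨅ i, (1 - s + s * h.eigenvalues i) / h.eigenvalues i ^ t) ^ 2 : ℝ) : ℂ) •
        smean A B t) (wmean A B s) ∧
    NearLE (wmean A B s)
      ((((⨆ i, (1 - s + s * h.eigenvalues i) / h.eigenvalues i ^ t) ^ 2 : ℝ) : ℂ) •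
        smean A B t) :=
  smean_wmean_near_order_range_general A B hA hB h s t hs1 hsn
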